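/- arXiv:1310.1862 — 4 statements merged into one kernel-verified Lean document; each statement's English description precedes it below -/
import Mathlib

section
/- Let R be a commutative ring admitting a desingularization {R_i}_{i∈I}, and let S ⊆ R be a multiplicatively closed subset. Then the localization S⁻¹R admits a desingularization; indeed, setting S_i to be the preimage of S in R_i, the system {S_i⁻¹R_i}_{i∈I} is a filtered directed system of noetherian regular rings with direct limit S⁻¹R. -/
universe u

open TensorProduct

/-- Projective dimension at most `n` (syzygy-style definition). -/
def ProjDimLE (R : Type u) [CommRing R] : ℕ → ModuleCat.{u} R → Prop
  | 0, M => Module.Projective R M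
  | n + 1, M => ∃ (P : ModuleCat.{u} R) (f : P →ₗ[R] M),
      Module.Projective R P ∧ Function.Surjective f ∧
      ProjDimLE R n (ModuleCat.of R (LinearMap.ker f))

/-- Flat dimension at most `n` (syzygy-style definition). -/
def FlatDimLE (R : Type u) [CommRing R] : ℕ → ModuleCat.{u} R → Prop
  | 0, M => Module.Flat R M
  | n + 1, M => ∃ (P : ModuleCat.{u} R) (f : P →ₗ[R] M),
      Module.Flat R P ∧ Function.Surjective f ∧
      FlatDimLE R n (ModuleCat.of R (LinearMap.ker f))

/-- `M` admits a resolution of length at most `n` by finitely generated free modules. -/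
def FiniteFreeResLE (R : Type u) [CommRing R] : ℕ → ModuleCat.{u} R → Prop
  | 0, M => Module.Free R M ∧ Module.Finite R M
  | n + 1, M => ∃ (P : ModuleCat.{u} R) (f : P →ₗ[R] M),
      Module.Free R P ∧ Module.Finite R P ∧ Function.Surjective f ∧
      FiniteFreeResLE R n (ModuleCat.of R (LinearMap.ker f))

/-- A (not necessarily noetherian) commutative ring is *regular* if every finitely
generated ideal has finite projective dimension. -/
def IsRegularRing' (R : Type u) [CommRing R] : Prop :=
  ∀ I : Ideal R, I.FG → ∃ n : ℕ, ProjDimLE R n (ModuleCat.of R I)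

/-- A commutative ring is *coherent* if every finitely generated ideal is finitely
presented as a module. -/
def IsCoherentRing (R : Type u) [CommRing R] : Prop :=
  ∀ I : Ideal R, I.FG → Module.FinitePresentation R I

/-- Global dimension at most `n`. -/
def GlobalDimLE (R : Type u) [CommRing R] (n : ℕ) : Prop :=
  ∀ M : ModuleCat.{u} R, ProjDimLE R n M

/-- Weak (Tor-) dimension at most `n`. -/
def WeakDimLE (R : Type u) [CommRing R] (n : ℕ) : Prop :=
  ∀ M : ModuleCat.{u} R, FlatDimLE R n M

/-- A ring homomorphism `f : A →+* B` is *pure* if for every `A`-module `M` the natural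
map `M → M ⊗[A] B`, `m ↦ m ⊗ 1`, is injective (where `B` is an `A`-module via `f`). -/
def RingHom.IsPureHom {A B : Type u} [CommRing A] [CommRing B] (f : A →+* B) : Prop :=
  ∀ (M : Type u) [AddCommGroup M] [Module A M],
    letI : Algebra A B := f.toAlgebra
    Function.Injective (fun m : M => (m ⊗ₜ[A] (1 : B) : M ⊗[A] B))

/-- A ring homomorphism is flat if it makes the target into a flat module over the source. -/
def RingHom.IsFlatHom {A B : Type u} [CommRing A] [CommRing B] (f : A →+* B) : Prop :=
  letI : Algebra A B := f.toAlgebra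
  Module.Flat A B

/-- A ring `R` *has a desingularization* if it is the direct limit (filtered colimit) of a
filtered directed system of noetherian regular rings. -/
def HasDesingularization (R : Type u) [CommRing R] : Prop :=
  ∃ (ι : Type u) (pre : Preorder ι) (A : ι → Type u) (instA : ∀ i, CommRing (A i)),
    letI := pre
    letI := instA
    IsDirected ι (· ≤ ·) ∧ Nonempty ι ∧
    (∀ i, IsNoetherianRing (A i)) ∧ (∀ i, IsRegularRing' (A i)) ∧
    ∃ (f : ∀ i j, i ≤ j → A i →+* A j) (g : ∀ i, A i →+* R),
      (∀ i (x : A i), f i i le_rfl x = x) ∧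
      (∀ i j k (hij : i ≤ j) (hjk : j ≤ k) (x : A i),
        f j k hjk (f i j hij x) = f i k (hij.trans hjk) x) ∧
      (∀ i j (hij : i ≤ j) (x : A i), g j (f i j hij x) = g i x) ∧
      (∀ x : R, ∃ (i : ι) (y : A i), g i y = x) ∧
      (∀ i (x : A i), g i x = 0 → ∃ (j : ι) (hij : i ≤ j), f i j hij x = 0)

section Aux

open TensorProduct

/-- `ProjDimLE` is invariant under linear equivalences. -/
lemma ProjDimLE.of_linearEquiv {R : Type u} [CommRing R] :
    ∀ (n : ℕ) (M N : ModuleCat.{u} R), (M ≃ₗ[R] N) → ProjDimLE R n M → ProjDimLE R n N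
  | 0, M, N, e, h => by
      haveI : Module.Projective R M := h
      exact Module.Projective.of_equiv e
  | n + 1, M, N, e, h => by
      obtain ⟨P, φ, hP, hs, hk⟩ := h
      refine ⟨P, e.toLinearMap ∘ₗ φ, hP, e.surjective.comp hs, ?_⟩
      have hker : LinearMap.ker (e.toLinearMap ∘ₗ φ) = LinearMap.ker φ := by
        ext x
        simp [LinearMap.mem_ker]
      rw [hker]
      exact hk

/-- `ProjDimLE` is preserved by flat base change. -/
lemma ProjDimLE.baseChange {A B : Type u} [CommRing A] [CommRing B] [Algebra A B]
    [Module.Flat A B] :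
    ∀ (n : ℕ) (M : ModuleCat.{u} A), ProjDimLE A n M →
      ProjDimLE B n (ModuleCat.of B (B ⊗[A] M))
  | 0, M, h => by
      haveI : Module.Projective A M := h
      show Module.Projective B (B ⊗[A] M)
      infer_instance
  | n + 1, M, h => by
      obtain ⟨P, φ, hP, hs, hk⟩ := h
      haveI : Module.Projective A P := hP
      refine ⟨ModuleCat.of B (B ⊗[A] P), φ.baseChange B,
        inferInstanceAs (Module.Projective B (B ⊗[A] P)), ?_, ?_⟩
      · exact LinearMap.lTensor_surjective B hs
      · have hex : Function.Exact ((LinearMap.ker φ).subtype.baseChange B) (φ.baseChange B) :=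
          lTensor_exact B φ.exact_subtype_ker_map hs
        have hinj : Function.Injective ((LinearMap.ker φ).subtype.baseChange B) :=
          Module.Flat.lTensor_preserves_injective_linearMap (M := B)
            (LinearMap.ker φ).subtype (Submodule.injective_subtype _)
        have hrange : LinearMap.range ((LinearMap.ker φ).subtype.baseChange B)
            = LinearMap.ker (φ.baseChange B) := (LinearMap.exact_iff.mp hex).symm
        have e : (B ⊗[A] (LinearMap.ker φ)) ≃ₗ[B] LinearMap.ker (φ.baseChange B) :=
          (LinearEquiv.ofInjective _ hinj).trans (LinearEquiv.ofEq _ _ hrange)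
        exact ProjDimLE.of_linearEquiv n
          (ModuleCat.of B (B ⊗[A] (LinearMap.ker φ)))
          (ModuleCat.of B (LinearMap.ker (φ.baseChange B))) e
          (ProjDimLE.baseChange n (ModuleCat.of A (LinearMap.ker φ)) hk)

/-- Localizations of noetherian regular rings are regular. -/
lemma isRegularRing_localization {A : Type u} [CommRing A] [IsNoetherianRing A]
    (hA : IsRegularRing' A) (T : Submonoid A) : IsRegularRing' (Localization T) := by
  intro J _
  set L := Localization T
  set I : Ideal A := J.comap (algebraMap A L) with hIdef
  have hIfg : I.FG := IsNoetherian.noetherian I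
  obtain ⟨n, hn⟩ := hA I hIfg
  have hIJ : I.map (algebraMap A L) = J := IsLocalization.map_comap T L J
  have e0 : (L ⊗[A] I) ≃ₗ[L] (I.map (algebraMap A L)) :=
    (IsLocalizedModule.isBaseChange T L (Algebra.idealMap L I)).equiv
  have e1 : (I.map (algebraMap A L) : Type u) ≃ₗ[L] J :=
    LinearEquiv.ofEq _ _ hIJ
  refine ⟨n, ProjDimLE.of_linearEquiv n (ModuleCat.of L (L ⊗[A] I)) (ModuleCat.of L J)
    (e0.trans e1) (ProjDimLE.baseChange n (ModuleCat.of A I) hn)⟩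

end Aux

/-- Localizations of rings with a desingularization have a desingularization:
if `R` is the direct limit of a filtered directed system `{R_i}` of noetherian regular rings and
`S ⊆ R` is a multiplicatively closed subset, then, with `S_i` the preimage of `S` in `R_i`,
the system `{S_i⁻¹ R_i}` (with the induced maps) is a filtered directed system of noetherian
regular rings with direct limit `S⁻¹R`; in particular `S⁻¹R` has a desingularization. -/
theorem statement_4
    {ι : Type u} [Preorder ι] [IsDirected ι (· ≤ ·)] [Nonempty ι]
    (A : ι → Type u) [∀ i, CommRing (A i)]
    [∀ i, IsNoetherianRing (A i)] (hreg : ∀ i, IsRegularRing' (A i))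
    (f : ∀ i j, i ≤ j → A i →+* A j)
    (hf_id : ∀ i (x : A i), f i i le_rfl x = x)
    (hf_comp : ∀ i j k (hij : i ≤ j) (hjk : j ≤ k) (x : A i),
      f j k hjk (f i j hij x) = f i k (hij.trans hjk) x)
    {R : Type u} [CommRing R]
    (g : ∀ i, A i →+* R)
    (hg : ∀ i j (hij : i ≤ j) (x : A i), g j (f i j hij x) = g i x)
    (hg_surj : ∀ x : R, ∃ (i : ι) (y : A i), g i y = x)
    (hg_ker : ∀ i (x : A i), g i x = 0 → ∃ (j : ι) (hij : i ≤ j), f i j hij x = 0)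
    (S : Submonoid R) :
    HasDesingularization (Localization S) ∧
    ∃ (F : ∀ i j, i ≤ j →
        Localization (S.comap (g i)) →+* Localization (S.comap (g j)))
      (G : ∀ i, Localization (S.comap (g i)) →+* Localization S),
      (∀ i j (hij : i ≤ j) (x : A i),
        F i j hij (algebraMap (A i) (Localization (S.comap (g i))) x) =
          algebraMap (A j) (Localization (S.comap (g j))) (f i j hij x)) ∧
      (∀ i (x : A i),
        G i (algebraMap (A i) (Localization (S.comap (g i))) x) =
          algebraMap R (Localization S) (g i x)) ∧
      (∀ i (y : Localization (S.comap (g i))), F i i le_rfl y = y) ∧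
      (∀ i j k (hij : i ≤ j) (hjk : j ≤ k) (y : Localization (S.comap (g i))),
        F j k hjk (F i j hij y) = F i k (hij.trans hjk) y) ∧
      (∀ i j (hij : i ≤ j) (y : Localization (S.comap (g i))),
        G j (F i j hij y) = G i y) ∧
      (∀ z : Localization S, ∃ (i : ι) (y : Localization (S.comap (g i))), G i y = z) ∧
      (∀ i (y : Localization (S.comap (g i))),
        G i y = 0 → ∃ (j : ι) (hij : i ≤ j), F i j hij y = 0) ∧
      (∀ i, IsNoetherianRing (Localization (S.comap (g i)))) ∧
      (∀ i, IsRegularRing' (Localization (S.comap (g i)))) := by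
  have hle : ∀ i j (hij : i ≤ j), S.comap (g i) ≤ (S.comap (g j)).comap (f i j hij) := by
    intro i j hij x hx
    simp only [Submonoid.mem_comap] at hx ⊢
    rw [hg i j hij x]
    exact hx
  set F : ∀ i j, i ≤ j → Localization (S.comap (g i)) →+* Localization (S.comap (g j)) :=
    fun i j hij => IsLocalization.map (Localization (S.comap (g j))) (f i j hij) (hle i j hij)
    with hFdef
  set G : ∀ i, Localization (S.comap (g i)) →+* Localization S :=
    fun i => IsLocalization.map (Localization S) (g i)
      (show S.comap (g i) ≤ Submonoid.comap (g i) S from le_rfl) with hGdef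
  have hFalg : ∀ i j (hij : i ≤ j) (x : A i),
      F i j hij (algebraMap (A i) (Localization (S.comap (g i))) x) =
        algebraMap (A j) (Localization (S.comap (g j))) (f i j hij x) := by
    intro i j hij x
    exact IsLocalization.map_eq _ _
  have hGalg : ∀ i (x : A i),
      G i (algebraMap (A i) (Localization (S.comap (g i))) x) =
        algebraMap R (Localization S) (g i x) := by
    intro i x
    exact IsLocalization.map_eq _ _
  have hFid : ∀ i (y : Localization (S.comap (g i))), F i i le_rfl y = y := by
    intro i y
    have h : F i i le_rfl = RingHom.id _ := by
      apply IsLocalization.ringHom_ext (S.comap (g i))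
      ext x
      simp only [RingHom.coe_comp, Function.comp_apply, RingHom.id_apply]
      rw [hFalg i i le_rfl x, hf_id i x]
    rw [h, RingHom.id_apply]
  have hFcomp : ∀ i j k (hij : i ≤ j) (hjk : j ≤ k) (y : Localization (S.comap (g i))),
      F j k hjk (F i j hij y) = F i k (hij.trans hjk) y := by
    intro i j k hij hjk y
    have h : (F j k hjk).comp (F i j hij) = F i k (hij.trans hjk) := by
      apply IsLocalization.ringHom_ext (S.comap (g i))
      ext x
      simp only [RingHom.coe_comp, Function.comp_apply]
      rw [hFalg i j hij x, hFalg j k hjk _, hFalg i k (hij.trans hjk) x,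
        hf_comp i j k hij hjk x]
    exact DFunLike.congr_fun h y
  have hGF : ∀ i j (hij : i ≤ j) (y : Localization (S.comap (g i))),
      G j (F i j hij y) = G i y := by
    intro i j hij y
    have h : (G j).comp (F i j hij) = G i := by
      apply IsLocalization.ringHom_ext (S.comap (g i))
      ext x
      simp only [RingHom.coe_comp, Function.comp_apply]
      rw [hFalg i j hij x, hGalg j _, hGalg i x, hg i j hij x]
    exact DFunLike.congr_fun h y
  have hGsurj : ∀ z : Localization S,
      ∃ (i : ι) (y : Localization (S.comap (g i))), G i y = z := by
    intro z
    obtain ⟨⟨r, s⟩, rfl⟩ := IsLocalization.mk'_surjective S z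
    obtain ⟨i, y, hy⟩ := hg_surj r
    obtain ⟨j, t, ht⟩ := hg_surj (s : R)
    obtain ⟨k, hik, hjk⟩ := directed_of (· ≤ ·) i j
    have hb : f j k hjk t ∈ S.comap (g k) := by
      simp only [Submonoid.mem_comap]
      rw [hg j k hjk t, ht]
      exact s.2
    refine ⟨k, IsLocalization.mk' _ (f i k hik y) (⟨f j k hjk t, hb⟩ : S.comap (g k)), ?_⟩
    rw [hGdef]
    rw [IsLocalization.map_mk']
    have h1 : g k (f i k hik y) = r := by rw [hg i k hik y, hy]
    have h2 : g k (f j k hjk t) = (s : R) := by rw [hg j k hjk t, ht]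
    exact congrArg₂ (fun (a : R) (b : S) => IsLocalization.mk' (Localization S) a b)
      h1 (Subtype.ext h2)
  have hGker : ∀ i (y : Localization (S.comap (g i))),
      G i y = 0 → ∃ (j : ι) (hij : i ≤ j), F i j hij y = 0 := by
    intro i y h0
    obtain ⟨⟨a, s⟩, rfl⟩ := IsLocalization.mk'_surjective (S.comap (g i)) y
    rw [hGdef, IsLocalization.map_mk', IsLocalization.mk'_eq_zero_iff] at h0
    obtain ⟨u, hu⟩ := h0
    obtain ⟨j, c, hc⟩ := hg_surj (u : R)
    obtain ⟨k, hik, hjk⟩ := directed_of (· ≤ ·) i j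
    have hzero : g k (f j k hjk c * f i k hik a) = 0 := by
      rw [map_mul, hg j k hjk c, hg i k hik a, hc]
      exact hu
    obtain ⟨l, hkl, hl⟩ := hg_ker k _ hzero
    rw [map_mul, hf_comp j k l hjk hkl c, hf_comp i k l hik hkl a] at hl
    refine ⟨l, hik.trans hkl, ?_⟩
    have hcl : f j l (hjk.trans hkl) c ∈ S.comap (g l) := by
      simp only [Submonoid.mem_comap]
      rw [hg j l (hjk.trans hkl) c, hc]
      exact u.2
    rw [hFdef, IsLocalization.map_mk', IsLocalization.mk'_eq_zero_iff]
    exact ⟨⟨f j l (hjk.trans hkl) c, hcl⟩, hl⟩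
  have hNoeth : ∀ i, IsNoetherianRing (Localization (S.comap (g i))) := by
    intro i
    exact IsLocalization.isNoetherianRing (S.comap (g i)) (Localization (S.comap (g i)))
      inferInstance
  have hReg : ∀ i, IsRegularRing' (Localization (S.comap (g i))) :=
    fun i => isRegularRing_localization (hreg i) (S.comap (g i))
  refine ⟨⟨ι, inferInstance, fun i => Localization (S.comap (g i)), fun i => inferInstance,
      inferInstance, inferInstance, hNoeth, hReg, F, G, hFid, hFcomp, hGF, hGsurj, hGker⟩,
    F, G, hFalg, hGalg, hFid, hFcomp, hGF, hGsurj, hGker, hNoeth, hReg⟩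
end

section
/- Let R be a discrete valuation ring of prime characteristic p and let R^∞ denote its perfect closure (obtained by adjoining all p^n-th roots of all elements of R). For each n ∈ ℕ set R_n := {x ∈ R^∞ : x^{p^n} ∈ R}. Then each R_n is a discrete valuation ring, R^∞ is the increasing union ⋃_n R_n, and consequently R^∞ is a valuation domain. -/
universe u

open TensorProduct

/-- For a ring `R` of prime characteristic `p`, the subring
`R_n := {x ∈ R^∞ : x^{p^n} ∈ R}` of the perfect closure `R^∞`. -/
noncomputable def perfectClosureLevel (R : Type u) [CommRing R] (p : ℕ)
    [Fact p.Prime] [CharP R p] (n : ℕ) : Subring (PerfectClosure R p) :=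
  (RingHom.range (PerfectClosure.of R p)).comap (iterateFrobenius (PerfectClosure R p) p n)


section PerfectClosureAux

open PerfectClosure

variable (R : Type u) [CommRing R] [IsDomain R] (p : ℕ) [Fact p.Prime] [CharP R p]

theorem pc_of_injective : Function.Injective (PerfectClosure.of R p) := fun x y h => by
  rw [of_apply, of_apply, eq_iff] at h
  simpa using h

theorem pc_isDomain : IsDomain (PerfectClosure R p) := by
  haveI : Nontrivial (PerfectClosure R p) := by
    refine ⟨0, 1, fun h => ?_⟩
    rw [zero_def, one_def, eq_iff] at h
    simp only [Function.iterate_zero_apply] at h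
    exact zero_ne_one h
  haveI : NoZeroDivisors (PerfectClosure R p) := by
    refine ⟨fun {a b} h => ?_⟩
    obtain ⟨⟨n, x⟩, rfl⟩ := PerfectClosure.mk_surjective R p a
    obtain ⟨⟨m, y⟩, rfl⟩ := PerfectClosure.mk_surjective R p b
    rw [mk_mul_mk, zero_def, eq_iff] at h
    simp only [Function.iterate_zero_apply, ← coe_iterateFrobenius, map_zero] at h
    have hp : (p : ℕ) ≠ 0 := (Fact.out : p.Prime).ne_zero
    rcases mul_eq_zero.mp h with h' | h'
    · left
      have hx : x = 0 := by
        have := h'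
        rw [iterateFrobenius_def] at this
        exact pow_eq_zero_iff (pow_ne_zero m hp) |>.mp this
      rw [hx]
      exact mk_zero_right R p n
    · right
      have hy : y = 0 := by
        have := h'
        rw [iterateFrobenius_def] at this
        exact pow_eq_zero_iff (pow_ne_zero n hp) |>.mp this
      rw [hy]
      exact mk_zero_right R p m
  exact NoZeroDivisors.to_isDomain _

/-- The ring hom `R →+* R^∞` sending `r` to `r ^ (p ^ -n)`. -/
noncomputable def pcLevelHom (n : ℕ) : R →+* PerfectClosure R p :=
  ((iterateFrobeniusEquiv (PerfectClosure R p) p n).symm :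
    PerfectClosure R p ≃+* PerfectClosure R p).toRingHom.comp (PerfectClosure.of R p)

theorem iterateFrobenius_pcLevelHom (n : ℕ) (r : R) :
    iterateFrobenius (PerfectClosure R p) p n (pcLevelHom R p n r) = PerfectClosure.of R p r := by
  show iterateFrobenius (PerfectClosure R p) p n
      ((iterateFrobeniusEquiv (PerfectClosure R p) p n).symm (PerfectClosure.of R p r)) = _
  rw [← coe_iterateFrobeniusEquiv, RingEquiv.apply_symm_apply]

theorem iterateFrobenius_pc_injective (n : ℕ) :
    Function.Injective (iterateFrobenius (PerfectClosure R p) p n) := by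
  rw [← coe_iterateFrobeniusEquiv]
  exact (iterateFrobeniusEquiv (PerfectClosure R p) p n).injective

theorem mem_perfectClosureLevel_iff (n : ℕ) (x : PerfectClosure R p) :
    x ∈ perfectClosureLevel R p n ↔
      ∃ r : R, PerfectClosure.of R p r = iterateFrobenius (PerfectClosure R p) p n x := by
  rw [perfectClosureLevel, Subring.mem_comap, RingHom.mem_range]

theorem pcLevelHom_injective (n : ℕ) : Function.Injective (pcLevelHom R p n) := by
  intro a b h
  apply pc_of_injective R p
  rw [← iterateFrobenius_pcLevelHom R p n a, ← iterateFrobenius_pcLevelHom R p n b, h]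

theorem mem_level_iff_pcLevelHom (n : ℕ) (x : PerfectClosure R p) :
    x ∈ perfectClosureLevel R p n ↔ ∃ r : R, pcLevelHom R p n r = x := by
  rw [mem_perfectClosureLevel_iff]
  constructor
  · rintro ⟨r, hr⟩
    refine ⟨r, iterateFrobenius_pc_injective R p n ?_⟩
    rw [iterateFrobenius_pcLevelHom, hr]
  · rintro ⟨r, rfl⟩
    exact ⟨r, (iterateFrobenius_pcLevelHom R p n r).symm⟩

/-- `R` is isomorphic to each level of its perfect closure. -/
noncomputable def pcLevelEquiv (n : ℕ) : R ≃+* perfectClosureLevel R p n :=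
  RingEquiv.ofBijective
    ((pcLevelHom R p n).codRestrict (perfectClosureLevel R p n).toSubsemiring fun r =>
      (mem_level_iff_pcLevelHom R p n _).mpr ⟨r, rfl⟩)
    ⟨fun a b h => pcLevelHom_injective R p n (congrArg Subtype.val h),
     fun ⟨x, hx⟩ => by
      obtain ⟨r, hr⟩ := (mem_level_iff_pcLevelHom R p n x).mp hx
      exact ⟨r, Subtype.ext hr⟩⟩

theorem dvr_of_ringEquiv {A B : Type u} [CommRing A] [IsDomain A] [IsDiscreteValuationRing A]
    [CommRing B] [IsDomain B] (e : A ≃+* B) : IsDiscreteValuationRing B := by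
  haveI : IsPrincipalIdealRing B := IsPrincipalIdealRing.of_surjective (e : A →+* B) e.surjective
  haveI : IsLocalRing B := e.isLocalRing
  exact ⟨fun hbot => IsDiscreteValuationRing.not_isField A
    (e.toMulEquiv.isField (IsLocalRing.isField_iff_maximalIdeal_eq.mpr hbot))⟩

end PerfectClosureAux

/-- Let `R` be a discrete valuation ring of prime characteristic `p` and
let `R^∞` be its perfect closure.  Setting `R_n := {x ∈ R^∞ : x^{p^n} ∈ R}`, every `R_n` is a
discrete valuation ring, `R^∞` is the increasing union `⋃_n R_n`, and consequently `R^∞` is a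
valuation domain. -/
theorem statement_5 (R : Type u) [CommRing R] [IsDomain R] [IsDiscreteValuationRing R]
    (p : ℕ) [Fact p.Prime] [CharP R p] :
    (∀ n : ℕ, ∃ h : IsDomain (perfectClosureLevel R p n),
      @IsDiscreteValuationRing (perfectClosureLevel R p n) _ h) ∧
    Monotone (perfectClosureLevel R p) ∧
    (⋃ n : ℕ, (perfectClosureLevel R p n : Set (PerfectClosure R p))) = Set.univ ∧
    ∃ h : IsDomain (PerfectClosure R p), @ValuationRing (PerfectClosure R p) _ h := by
  haveI hdom : IsDomain (PerfectClosure R p) := pc_isDomain R p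
  have hmono : Monotone (perfectClosureLevel R p) := by
    apply monotone_nat_of_le_succ
    intro n x hx
    rw [mem_perfectClosureLevel_iff] at hx ⊢
    obtain ⟨r, hr⟩ := hx
    refine ⟨r ^ p, ?_⟩
    rw [map_pow, hr, iterateFrobenius_def, iterateFrobenius_def, ← pow_mul, ← pow_succ]
  have hmk : ∀ (n : ℕ) (y : R), PerfectClosure.mk R p (n, y) ∈ perfectClosureLevel R p n := by
    intro n y
    rw [mem_perfectClosureLevel_iff]
    refine ⟨y, ?_⟩
    rw [coe_iterateFrobenius]
    exact (PerfectClosure.iterate_frobenius_mk R p n y).symm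
  refine ⟨fun n => ⟨inferInstance, dvr_of_ringEquiv (pcLevelEquiv R p n)⟩, hmono, ?_, ?_⟩
  · refine Set.eq_univ_of_forall fun x => ?_
    obtain ⟨⟨n, y⟩, rfl⟩ := PerfectClosure.mk_surjective R p x
    exact Set.mem_iUnion.mpr ⟨n, hmk n y⟩
  · refine ⟨hdom, ?_⟩
    haveI : PreValuationRing (PerfectClosure R p) := ⟨fun a b => ?_⟩
    · exact ⟨⟩
    obtain ⟨⟨n, xa⟩, rfl⟩ := PerfectClosure.mk_surjective R p a
    obtain ⟨⟨m, xb⟩, rfl⟩ := PerfectClosure.mk_surjective R p b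
    set k := max n m with hk
    have ha : PerfectClosure.mk R p (n, xa) ∈ perfectClosureLevel R p k :=
      hmono (le_max_left n m) (hmk n xa)
    have hb : PerfectClosure.mk R p (m, xb) ∈ perfectClosureLevel R p k :=
      hmono (le_max_right n m) (hmk m xb)
    haveI : IsDiscreteValuationRing (perfectClosureLevel R p k) :=
      dvr_of_ringEquiv (pcLevelEquiv R p k)
    obtain ⟨c, hc | hc⟩ := ValuationRing.cond
      (⟨_, ha⟩ : perfectClosureLevel R p k) (⟨_, hb⟩ : perfectClosureLevel R p k)
    · exact ⟨(c : PerfectClosure R p), Or.inl (congrArg Subtype.val hc)⟩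
    · exact ⟨(c : PerfectClosure R p), Or.inr (congrArg Subtype.val hc)⟩
end

section
/- Let R be a coherent commutative ring containing a field k, and let x_1, …, x_n be a regular sequence on R contained in the Jacobson radical of R. Then: (i) for every permutation σ of {1, …, n}, the sequence x_{σ(1)}, …, x_{σ(n)} is a regular sequence on R; (ii) for all positive integers m_1, …, m_n, the sequence x_1^{m_1}, …, x_n^{m_n} is a regular sequence on R. -/
universe u

open TensorProduct

section StatementSeventeenAux

open Pointwise RingTheory.Sequence

variable {R : Type u} [CommRing R]


variable {R : Type u} [CommRing R]

lemma mem_smul_top_iff' {M : Type u} [AddCommGroup M] [Module R M] (r : R) (x : M) :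
    x ∈ r • (⊤ : Submodule R M) ↔ ∃ y : M, r • y = x := by
  rw [← SetLike.mem_coe, Submodule.coe_pointwise_smul, Set.mem_smul_set]
  constructor
  · rintro ⟨y, -, rfl⟩; exact ⟨y, rfl⟩
  · rintro ⟨y, rfl⟩; exact ⟨y, trivial, rfl⟩

lemma weaklyRegular_of_exact (rs : List R) :
    ∀ {A B C : Type u} [AddCommGroup A] [Module R A] [AddCommGroup B] [Module R B]
      [AddCommGroup C] [Module R C] (f : A →ₗ[R] B) (g : B →ₗ[R] C),
      Function.Injective f → Function.Surjective g → Function.Exact f g →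
      IsWeaklyRegular A rs → IsWeaklyRegular C rs → IsWeaklyRegular B rs := by
  induction rs with
  | nil => intros; exact IsWeaklyRegular.nil _ _
  | cons r rs ih =>
    intro A B C _ _ _ _ _ _ f g hf hg hfg hA hC
    rw [isWeaklyRegular_cons_iff] at hA hC ⊢
    obtain ⟨hrA, hA'⟩ := hA
    obtain ⟨hrC, hC'⟩ := hC
    have key : ∀ b : B, r • b = 0 → b = 0 := by
      intro b hb
      have hgb : g b = 0 := hrC (show r • g b = r • (0 : C) by
        rw [← map_smul, hb, map_zero, smul_zero])
      obtain ⟨a, rfl⟩ := (hfg b).mp hgb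
      have h2 : r • a = 0 := hf (show f (r • a) = f 0 by
        rw [map_smul, map_zero, hb])
      have ha : a = 0 := hrA (h2.trans (smul_zero r).symm)
      rw [ha, map_zero]
    have hrB : IsSMulRegular B r := by
      intro b b' hbb
      have h0 : r • (b - b') = 0 := by
        rw [smul_sub, show r • b = r • b' from hbb, sub_self]
      exact sub_eq_zero.mp (key _ h0)
    refine ⟨hrB, ih (QuotSMulTop.map r f) (QuotSMulTop.map r g) ?_
      (QuotSMulTop.map_surjective r hg) (QuotSMulTop.map_exact r hfg hg) hA' hC'⟩
    rw [← LinearMap.ker_eq_bot, LinearMap.ker_eq_bot']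
    intro q hq
    obtain ⟨a, rfl⟩ := Submodule.Quotient.mk_surjective _ q
    rw [QuotSMulTop.map_apply_mk, Submodule.Quotient.mk_eq_zero] at hq
    obtain ⟨b, hb⟩ := (mem_smul_top_iff' r (f a)).mp hq
    have hgb : g b = 0 := hrC (show r • g b = r • (0 : C) by
      rw [← map_smul, hb, hfg.apply_apply_eq_zero a, smul_zero])
    obtain ⟨a', ha'⟩ := (hfg b).mp hgb
    have : f (r • a') = f a := by rw [map_smul, ha', hb]
    have ha : r • a' = a := hf this
    rw [Submodule.Quotient.mk_eq_zero]
    exact (mem_smul_top_iff' r a).mpr ⟨a', ha⟩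

lemma isWeaklyRegular_pow_cons {M : Type u} [AddCommGroup M] [Module R M]
    {r : R} {rs : List R} (h : IsWeaklyRegular M (r :: rs)) (m : ℕ) (hm : 0 < m) :
    IsWeaklyRegular M (r ^ m :: rs) := by
  obtain ⟨k, rfl⟩ : ∃ k, m = k + 1 := ⟨m - 1, (Nat.succ_pred_eq_of_pos hm).symm⟩
  clear hm
  induction k with
  | zero => simpa using h
  | succ k ih =>
    rw [isWeaklyRegular_cons_iff] at h ih ⊢
    obtain ⟨hr, hq⟩ := h
    obtain ⟨-, hqk⟩ := ih
    refine ⟨hr.pow _, ?_⟩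
    have hle₁ : (r ^ (k + 1)) • (⊤ : Submodule R M) ≤
        Submodule.comap (LinearMap.lsmul R M r) ((r ^ (k + 1 + 1)) • ⊤) := by
      intro z hz
      obtain ⟨y, rfl⟩ := (mem_smul_top_iff' _ z).mp hz
      refine Submodule.mem_comap.mpr ((mem_smul_top_iff' _ _).mpr ⟨y, ?_⟩)
      rw [LinearMap.lsmul_apply, smul_smul, ← pow_succ']
    have hle₂ : (r ^ (k + 1 + 1)) • (⊤ : Submodule R M) ≤
        Submodule.comap (LinearMap.id : M →ₗ[R] M) (r • ⊤) := by
      intro z hz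
      obtain ⟨y, rfl⟩ := (mem_smul_top_iff' _ z).mp hz
      refine Submodule.mem_comap.mpr ((mem_smul_top_iff' _ _).mpr ⟨r ^ (k+1) • y, ?_⟩)
      rw [LinearMap.id_apply, smul_smul, ← pow_succ']
    set f : QuotSMulTop (r ^ (k + 1)) M →ₗ[R] QuotSMulTop (r ^ (k + 1 + 1)) M :=
      Submodule.mapQ _ _ (LinearMap.lsmul R M r) hle₁ with hf_def
    set g : QuotSMulTop (r ^ (k + 1 + 1)) M →ₗ[R] QuotSMulTop r M :=
      Submodule.mapQ _ _ (LinearMap.id : M →ₗ[R] M) hle₂ with hg_def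
    have hf : Function.Injective f := by
      rw [← LinearMap.ker_eq_bot, LinearMap.ker_eq_bot']
      intro q hq
      obtain ⟨y, rfl⟩ := Submodule.Quotient.mk_surjective _ q
      rw [hf_def, Submodule.mapQ_apply, Submodule.Quotient.mk_eq_zero] at hq
      obtain ⟨z, hz⟩ := (mem_smul_top_iff' _ _).mp hq
      have hz' : r • (r ^ (k + 1) • z) = r • y := by
        rw [smul_smul, ← pow_succ', hz, LinearMap.lsmul_apply]
      have := hr hz'
      rw [Submodule.Quotient.mk_eq_zero]
      exact (mem_smul_top_iff' _ _).mpr ⟨z, this⟩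
    have hg : Function.Surjective g := by
      intro c
      obtain ⟨y, rfl⟩ := Submodule.Quotient.mk_surjective _ c
      exact ⟨Submodule.Quotient.mk y, by rw [hg_def, Submodule.mapQ_apply]; rfl⟩
    have hfg : Function.Exact f g := by
      intro q
      obtain ⟨y, rfl⟩ := Submodule.Quotient.mk_surjective _ q
      constructor
      · intro h0
        rw [hg_def, Submodule.mapQ_apply, LinearMap.id_apply,
          Submodule.Quotient.mk_eq_zero] at h0
        obtain ⟨z, hz⟩ := (mem_smul_top_iff' _ _).mp h0
        exact ⟨Submodule.Quotient.mk z, by rw [hf_def, Submodule.mapQ_apply,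
          LinearMap.lsmul_apply, hz]⟩
      · rintro ⟨a, ha⟩
        obtain ⟨z, rfl⟩ := Submodule.Quotient.mk_surjective _ a
        rw [hf_def, Submodule.mapQ_apply, LinearMap.lsmul_apply] at ha
        rw [hg_def, ← ha, Submodule.mapQ_apply, LinearMap.id_apply,
          Submodule.Quotient.mk_eq_zero]
        exact (mem_smul_top_iff' _ _).mpr ⟨z, rfl⟩
    exact weaklyRegular_of_exact rs f g hf hg hfg hqk hq

lemma isWeaklyRegular_map_pow :
    ∀ (l : List (R × ℕ)) {M : Type u} [AddCommGroup M] [Module R M],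
      (∀ p ∈ l, 0 < p.2) → IsWeaklyRegular M (l.map Prod.fst) →
      IsWeaklyRegular M (l.map fun p => p.1 ^ p.2) := by
  intro l
  induction l with
  | nil => intro M _ _ _ _; exact IsWeaklyRegular.nil _ _
  | cons p l ih =>
    intro M _ _ hpos h
    rw [List.map_cons, isWeaklyRegular_cons_iff] at h
    have h2 := ih (fun q hq => hpos q (List.mem_cons_of_mem _ hq)) h.2
    rw [List.map_cons]
    exact isWeaklyRegular_pow_cons
      ((isWeaklyRegular_cons_iff _ _ _).mpr ⟨h.1, h2⟩) _ (hpos p (List.mem_cons_self))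



variable {R : Type u} [CommRing R]

lemma fp_quot_map (hcoh : IsCoherentRing R)
    {N J : Ideal R} (hN : N.FG) (hJ : J.FG) (hNJ : N ≤ J) :
    Module.FinitePresentation R (Submodule.map (N : Submodule R R).mkQ J) := by
  haveI : Module.FinitePresentation R J := hcoh J hJ
  set f : J →ₗ[R] R ⧸ (N : Submodule R R) :=
    (N : Submodule R R).mkQ ∘ₗ (Submodule.subtype J) with hf_def
  have hker : LinearMap.ker f = Submodule.comap (Submodule.subtype J) N := by
    rw [hf_def, LinearMap.ker_comp, Submodule.ker_mkQ]
  have hkerfg : (LinearMap.ker f).FG := by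
    rw [hker]
    apply Submodule.fg_of_fg_map_of_fg_inf_ker (Submodule.subtype J)
    · rwa [Submodule.map_comap_subtype, inf_eq_right.mpr hNJ]
    · rw [Submodule.ker_subtype, inf_bot_eq]
      exact Submodule.fg_bot
  have hmem : ∀ c : J, f c ∈ Submodule.map (N : Submodule R R).mkQ J :=
    fun c => Submodule.mem_map_of_mem c.2
  set l : J →ₗ[R] (Submodule.map (N : Submodule R R).mkQ J) :=
    LinearMap.codRestrict _ f hmem with hl_def
  have hsurj : Function.Surjective l := by
    rintro ⟨y, hy⟩
    obtain ⟨z, hz, rfl⟩ := hy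
    exact ⟨⟨z, hz⟩, rfl⟩
  refine Module.finitePresentation_of_surjective l hsurj ?_
  rwa [hl_def, LinearMap.ker_codRestrict]

lemma torsion_fg (hcoh : IsCoherentRing R)
    {N : Submodule R R} (hN : N.FG) (b : R) :
    (Submodule.torsionBy R (R ⧸ N) b).FG := by
  haveI hQ : Module.FinitePresentation R (R ⧸ N) :=
    Module.finitePresentation_of_surjective N.mkQ N.mkQ_surjective
      (by rwa [Submodule.ker_mkQ])
  set J : Ideal R := N ⊔ Ideal.span {b} with hJ_def
  have hJ : J.FG := Submodule.FG.sup hN (Submodule.fg_span_singleton b)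
  have hfp := fp_quot_map hcoh hN hJ le_sup_left
  set g : (R ⧸ N) →ₗ[R] (R ⧸ N) := LinearMap.lsmul R (R ⧸ N) b with hg_def
  have hrange : LinearMap.range g = Submodule.map N.mkQ J := by
    apply le_antisymm
    · rintro _ ⟨q, rfl⟩
      obtain ⟨z, rfl⟩ := N.mkQ_surjective q
      have : g (N.mkQ z) = N.mkQ (b * z) := by
        rw [hg_def, LinearMap.lsmul_apply, ← map_smul, smul_eq_mul]
      rw [this]
      exact Submodule.mem_map_of_mem
        (Submodule.mem_sup_right (Ideal.mem_span_singleton.mpr ⟨z, rfl⟩))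
    · rintro _ ⟨z, hz, rfl⟩
      obtain ⟨u, hu, v, hv, rfl⟩ := Submodule.mem_sup.mp hz
      obtain ⟨a, rfl⟩ := Ideal.mem_span_singleton'.mp hv
      refine ⟨N.mkQ a, ?_⟩
      have h1 : N.mkQ u = 0 := (Submodule.Quotient.mk_eq_zero N).mpr hu
      rw [hg_def, LinearMap.lsmul_apply, ← map_smul, smul_eq_mul, map_add, h1,
        zero_add, mul_comm]
  have hker : Submodule.torsionBy R (R ⧸ N) b = LinearMap.ker g := by
    ext q
    rw [Submodule.mem_torsionBy_iff, LinearMap.mem_ker, hg_def, LinearMap.lsmul_apply]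
  rw [← hrange] at hfp
  haveI : Module.FinitePresentation R (LinearMap.range g) := hfp
  have hfg := Module.FinitePresentation.fg_ker g.rangeRestrict
    (LinearMap.surjective_rangeRestrict g)
  rwa [LinearMap.ker_rangeRestrict, ← hker] at hfg


end StatementSeventeenAux

open RingTheory.Sequence in
/-- Let `R` be a coherent ring containing a field `k`, and let
`x₁, …, xₙ` be a regular sequence on `R` contained in the Jacobson radical of `R`.  Then
(i) every permutation of `x₁, …, xₙ` is a regular sequence on `R`, and (ii) for all positive
integers `m₁, …, mₙ` the sequence `x₁^{m₁}, …, xₙ^{mₙ}` is a regular sequence on `R`. -/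
theorem statement_17
    {k R : Type u} [Field k] [CommRing R] [Algebra k R]
    (hcoh : IsCoherentRing R)
    {n : ℕ} (x : Fin n → R)
    (hreg : RingTheory.Sequence.IsRegular R (List.ofFn x))
    (hjac : ∀ i, x i ∈ (⊥ : Ideal R).jacobson) :
    (∀ σ : Equiv.Perm (Fin n),
      RingTheory.Sequence.IsRegular R (List.ofFn (x ∘ σ))) ∧
    (∀ m : Fin n → ℕ, (∀ i, 0 < m i) →
      RingTheory.Sequence.IsRegular R (List.ofFn fun i => x i ^ m i)) := by
  haveI := hreg.nontrivial
  have hjac' : ∀ r, r ∈ List.ofFn x → r ∈ (Module.annihilator R R).jacobson := by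
    intro r hr
    obtain ⟨i, rfl⟩ := List.mem_ofFn.mp hr
    exact Ideal.jacobson_mono bot_le (hjac i)
  constructor
  · intro σ
    have hperm : (List.ofFn x).Perm (List.ofFn (x ∘ σ)) := (Equiv.Perm.ofFn_comp_perm σ x).symm
    refine ⟨hreg.toIsWeaklyRegular.prototype_perm hperm ?_, ?_⟩
    · intro a b rs' hsub
      intro K hKa
      show K = ⊥
      have hNfg : (Ideal.ofList rs' • (⊤ : Submodule R R)).FG := by
        rw [Ideal.smul_eq_mul, Ideal.mul_top]
        exact Submodule.fg_span rs'.finite_toSet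
      have hK2 := torsion_fg hcoh hNfg b
      refine Submodule.eq_bot_of_eq_pointwise_smul_of_mem_jacobson_annihilator hK2 hKa ?_
      have ha : a ∈ List.ofFn x := hsub.subset (List.mem_cons_self)
      obtain ⟨i, rfl⟩ := List.mem_ofFn.mp ha
      exact Ideal.jacobson_mono bot_le (hjac i)
    · apply Submodule.top_ne_ideal_smul_of_le_jacobson_annihilator
      rw [Ideal.span_le]
      intro r hr
      exact hjac' r (hperm.mem_iff.mpr hr)
  · intro m hm
    have hl : (List.ofFn (fun i => (x i, m i))).map Prod.fst = List.ofFn x := by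
      rw [List.map_ofFn]; rfl
    have hw := isWeaklyRegular_map_pow (List.ofFn fun i => (x i, m i))
      (fun p hp => by
        obtain ⟨i, rfl⟩ := List.mem_ofFn.mp hp
        exact hm i)
      (hl ▸ hreg.toIsWeaklyRegular)
    have hgoal : (List.ofFn (fun i => (x i, m i))).map (fun p => p.1 ^ p.2)
        = List.ofFn (fun i => x i ^ m i) := by
      rw [List.map_ofFn]; rfl
    refine ⟨hgoal ▸ hw, ?_⟩
    apply Submodule.top_ne_ideal_smul_of_le_jacobson_annihilator
    rw [Ideal.span_le]
    intro r hr
    obtain ⟨i, rfl⟩ := List.mem_ofFn.mp hr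
    exact Ideal.jacobson_mono bot_le
      (Ideal.pow_mem_of_mem _ (hjac i) _ (hm i))
end

section
/- Let F be a field and let R be an F-algebra that is the direct limit of a filtered directed system of F-algebras, each of which is isomorphic as an F-algebra to a polynomial ring over F in finitely many variables. Then the module of Kähler differentials Ω¹_{R/F} is a flat R-module. -/
universe u

open TensorProduct

open Finsupp

section FsMap

variable {A B C : Type u} [CommRing A] [CommRing B] [CommRing C]

/-- The map `(A →₀ A) →+ (B →₀ B)` induced by a ring hom `A →+* B`. -/
noncomputable def fsMap (h : A →+* B) : (A →₀ A) →+ (B →₀ B) :=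
  (Finsupp.mapRange.addMonoidHom h.toAddMonoidHom).comp
    (Finsupp.mapDomain.addMonoidHom h)

lemma fsMap_single (h : A →+* B) (a b : A) :
    fsMap h (Finsupp.single a b) = Finsupp.single (h a) (h b) := by
  simp [fsMap, Finsupp.mapDomain_single]

lemma fsMap_smul (h : A →+* B) (a : A) (u : A →₀ A) :
    fsMap h (a • u) = h a • fsMap h u := by
  induction u using Finsupp.induction with
  | zero => simp
  | single_add x b f hx hb ih =>
    rw [smul_add, map_add, map_add, smul_add, ih]
    congr 1
    rw [Finsupp.smul_single, fsMap_single, fsMap_single, Finsupp.smul_single,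
      smul_eq_mul, smul_eq_mul, map_mul]

lemma fsMap_fsMap (h₂ : B →+* C) (h₁ : A →+* B) (u : A →₀ A) :
    fsMap h₂ (fsMap h₁ u) = fsMap (h₂.comp h₁) u := by
  induction u using Finsupp.induction with
  | zero => simp
  | single_add x b f hx hb ih =>
    rw [map_add, map_add, map_add, ih, fsMap_single, fsMap_single, fsMap_single]
    rfl

lemma fsMap_eq_sum (h : A →+* B) (u : A →₀ A) :
    fsMap h u = ∑ b ∈ u.support, Finsupp.single (h b) (h (u b)) := by
  conv_lhs => rw [← Finsupp.sum_single u]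
  rw [Finsupp.sum, map_sum]
  exact Finset.sum_congr rfl fun b _ => fsMap_single h b (u b)

lemma fsMap_kerTotal {F : Type u} [CommRing F] [Algebra F A] [Algebra F B]
    (h : A →ₐ[F] B) {u : A →₀ A} (hu : u ∈ KaehlerDifferential.kerTotal F A) :
    fsMap h.toRingHom u ∈ KaehlerDifferential.kerTotal F B := by
  induction hu using Submodule.span_induction with
  | mem x hx =>
    obtain ((⟨⟨p, q⟩, rfl⟩ | ⟨⟨p, q⟩, rfl⟩) | ⟨c, rfl⟩) := hx
    · refine Submodule.subset_span (Or.inl (Or.inl ⟨⟨h p, h q⟩, ?_⟩))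
      simp [fsMap_single, map_add, map_sub]
    · refine Submodule.subset_span (Or.inl (Or.inr ⟨⟨h p, h q⟩, ?_⟩))
      simp [fsMap_single, map_add, map_sub]
    · refine Submodule.subset_span (Or.inr ⟨c, ?_⟩)
      simp [fsMap_single, AlgHom.commutes]
  | zero => simp
  | add x y hx hy ihx ihy => rw [map_add]; exact Submodule.add_mem _ ihx ihy
  | smul a x hx ih =>
    rw [fsMap_smul]
    exact Submodule.smul_mem _ _ ih

end FsMap

lemma fsMap_const_fiber {A B : Type u} [CommRing A] [CommRing B] (h : A →+* B)
    (u : A →₀ A) (t : B) (hc : ∀ b ∈ u.support, h b = t) :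
    fsMap h u = Finsupp.single t (h (∑ b ∈ u.support, u b)) := by
  have hsingle : Finsupp.single t (h (∑ b ∈ u.support, u b))
      = ∑ b ∈ u.support, Finsupp.single t (h (u b)) := by
    rw [map_sum h]
    exact map_sum (Finsupp.singleAddHom t) _ _
  rw [fsMap_eq_sum, hsingle]
  exact Finset.sum_congr rfl fun b hb => by rw [hc b hb]

lemma fsMap_apply_eq {A B : Type u} [CommRing A] [CommRing B] [DecidableEq B] (h : A →+* B)
    (u : A →₀ A) (t : B) :
    fsMap h u t = ∑ b ∈ u.support.filter (fun b => h b = t), h (u b) := by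
  classical
  rw [fsMap_eq_sum, Finsupp.finset_sum_apply, Finset.sum_filter]
  refine Finset.sum_congr rfl fun b _ => ?_
  rw [Finsupp.single_apply]

section Dies

variable {F : Type u} [Field F]
    {ι : Type u} [Preorder ι] [IsDirected ι (· ≤ ·)] [Nonempty ι]
    {A : ι → Type u} [∀ i, CommRing (A i)] [∀ i, Algebra F (A i)]
    (f : ∀ i j, i ≤ j → A i →ₐ[F] A j)
    (hf_comp : ∀ i j k (hij : i ≤ j) (hjk : j ≤ k) (x : A i),
      f j k hjk (f i j hij x) = f i k (hij.trans hjk) x)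
    {R : Type u} [CommRing R] [Algebra F R]
    (g : ∀ i, A i →ₐ[F] R)
    (hg_ker : ∀ i (x : A i), g i x = 0 → ∃ (j : ι) (hij : i ≤ j), f i j hij x = 0)

include hf_comp hg_ker in
lemma fsMap_dies (i : ι) (u : A i →₀ A i) (hu : fsMap (g i).toRingHom u = 0) :
    ∃ (j : ι) (hij : i ≤ j), fsMap (f i j hij).toRingHom u = 0 := by
  classical
  suffices H : ∀ (n : ℕ) (u : A i →₀ A i), u.support.card ≤ n →
      fsMap (g i).toRingHom u = 0 →
      ∃ (j : ι) (hij : i ≤ j), fsMap (f i j hij).toRingHom u = 0 from H _ u le_rfl hu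
  intro n
  induction n with
  | zero =>
    intro u hcard _
    have : u = 0 := by
      rw [← Finsupp.support_eq_empty]
      exact Finset.card_eq_zero.mp (Nat.le_zero.mp hcard)
    exact ⟨i, le_rfl, by simp [this]⟩
  | succ n IH =>
    intro u hcard hu0
    by_cases hzero : u = 0
    · exact ⟨i, le_rfl, by simp [hzero]⟩
    obtain ⟨a, ha⟩ := Finsupp.support_nonempty_iff.mpr hzero
    set uT := u.filter (fun b => (g i).toRingHom b = (g i).toRingHom a) with huT
    set uC := u.filter (fun b => ¬ (g i).toRingHom b = (g i).toRingHom a) with huC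
    have hsplit : uT + uC = u := Finsupp.filter_pos_add_filter_neg u _
    have hTsupp : uT.support
        = u.support.filter (fun b => (g i).toRingHom b = (g i).toRingHom a) :=
      Finsupp.support_filter ..
    have hCsupp : uC.support
        = u.support.filter (fun b => ¬ (g i).toRingHom b = (g i).toRingHom a) :=
      Finsupp.support_filter ..
    set s : A i := ∑ b ∈ uT.support, uT b with hs
    -- the coefficient sum over the fiber of `a` maps to zero in `R`
    have hgs : (g i).toRingHom s = 0 := by
      have h1 : (fsMap (g i).toRingHom u) ((g i).toRingHom a) = (g i).toRingHom s := by
        rw [fsMap_apply_eq, hs, map_sum, ← hTsupp]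
        refine (Finset.sum_congr rfl fun b hb => ?_).symm
        rw [hTsupp, Finset.mem_filter] at hb
        rw [Finsupp.filter_apply_pos
          (fun b => (g i).toRingHom b = (g i).toRingHom a) u hb.2]
      rw [hu0] at h1
      simpa using h1.symm
    -- the `T`-part of `u` dies at stage `J₁`
    obtain ⟨j₀, hij₀, hj₀⟩ := hg_ker i s hgs
    have hfib : ∀ b : A i, ∃ (j : ι) (hij : i ≤ j),
        b ∈ uT.support → f i j hij (b - a) = 0 := by
      intro b
      by_cases hb : b ∈ uT.support
      · rw [hTsupp, Finset.mem_filter] at hb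
        obtain ⟨j, hij, hzz⟩ := hg_ker i (b - a) (by rw [map_sub, sub_eq_zero]; exact hb.2)
        exact ⟨j, hij, fun _ => hzz⟩
      · exact ⟨i, le_rfl, fun h => absurd h hb⟩
    choose jb hjb₁ hjb₂ using hfib
    obtain ⟨J₀, hJ₀⟩ := Finset.exists_le (uT.support.image jb)
    obtain ⟨J₁, hj₀J₁, hJ₀J₁⟩ := directed_of (· ≤ ·) j₀ J₀
    have hiJ₁ : i ≤ J₁ := hij₀.trans hj₀J₁
    have hTdies : fsMap (f i J₁ hiJ₁).toRingHom uT = 0 := by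
      rw [fsMap_const_fiber _ _ ((f i J₁ hiJ₁).toRingHom a) fun b hb => ?_, ← hs]
      · have hzs : f i J₁ hiJ₁ s = 0 := by
          rw [← hf_comp i j₀ J₁ hij₀ hj₀J₁ s, hj₀, map_zero]
        show Finsupp.single _ (f i J₁ hiJ₁ s) = 0
        rw [hzs, Finsupp.single_zero]
      · have hle : jb b ≤ J₁ :=
          (hJ₀ _ (Finset.mem_image.mpr ⟨b, hb, rfl⟩)).trans hJ₀J₁
        have h3 : f i J₁ hiJ₁ (b - a) = 0 := by
          rw [← hf_comp i (jb b) J₁ (hjb₁ b) hle, hjb₂ b hb, map_zero]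
        rw [map_sub, sub_eq_zero] at h3
        exact h3
    -- the complement also maps to zero in `R`, with smaller support
    have hTzero : fsMap (g i).toRingHom uT = 0 := by
      rw [fsMap_const_fiber _ _ ((g i).toRingHom a) fun b hb => ?_, ← hs, hgs,
        Finsupp.single_zero]
      rw [hTsupp, Finset.mem_filter] at hb
      exact hb.2
    have hCzero : fsMap (g i).toRingHom uC = 0 := by
      have h4 := congrArg (fsMap (g i).toRingHom) hsplit
      rw [map_add, hTzero, zero_add] at h4
      rw [h4, hu0]
    have hCcard : uC.support.card ≤ n := by
      have hsub : uC.support ⊆ u.support.erase a := by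
        intro b hb
        rw [hCsupp, Finset.mem_filter] at hb
        refine Finset.mem_erase.mpr ⟨?_, hb.1⟩
        rintro rfl; exact hb.2 rfl
      have h5 := Finset.card_le_card hsub
      rw [Finset.card_erase_of_mem ha] at h5
      omega
    obtain ⟨j₂, hij₂, hj₂⟩ := IH uC hCcard hCzero
    obtain ⟨K, hK₁, hK₂⟩ := directed_of (· ≤ ·) J₁ j₂
    refine ⟨K, hiJ₁.trans hK₁, ?_⟩
    have hcompT : fsMap (f i K (hiJ₁.trans hK₁)).toRingHom uT = 0 := by
      have h6 : (f J₁ K hK₁).toRingHom.comp (f i J₁ hiJ₁).toRingHom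
          = (f i K (hiJ₁.trans hK₁)).toRingHom := RingHom.ext fun x => hf_comp _ _ _ _ _ x
      rw [← h6, ← fsMap_fsMap, hTdies, map_zero]
    have hcompC : fsMap (f i K (hiJ₁.trans hK₁)).toRingHom uC = 0 := by
      have h6 : (f j₂ K hK₂).toRingHom.comp (f i j₂ hij₂).toRingHom
          = (f i K (hiJ₁.trans hK₁)).toRingHom := RingHom.ext fun x => hf_comp _ _ _ _ _ x
      rw [← h6, ← fsMap_fsMap, hj₂, map_zero]
    rw [← hsplit, map_add, hcompT, hcompC, add_zero]

end Dies

section Lift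

variable {F : Type u} [Field F]
    {ι : Type u} [Preorder ι] [IsDirected ι (· ≤ ·)] [Nonempty ι]
    {A : ι → Type u} [∀ i, CommRing (A i)] [∀ i, Algebra F (A i)]
    (f : ∀ i j, i ≤ j → A i →ₐ[F] A j)
    {R : Type u} [CommRing R] [Algebra F R]
    (g : ∀ i, A i →ₐ[F] R)
    (hg : ∀ i j (hij : i ≤ j) (x : A i), g j (f i j hij x) = g i x)
    (hg_surj : ∀ x : R, ∃ (i : ι) (y : A i), g i y = x)

include hg in
lemma fsMap_g_f (i j : ι) (hij : i ≤ j) (u : A i →₀ A i) :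
    fsMap (g j).toRingHom (fsMap (f i j hij).toRingHom u) = fsMap (g i).toRingHom u := by
  have hcomp : (g j).toRingHom.comp (f i j hij).toRingHom = (g i).toRingHom := by
    ext x
    exact hg i j hij x
  rw [fsMap_fsMap, hcomp]

include hg hg_surj in
lemma lift_pair (z₁ z₂ : R) :
    ∃ (i : ι) (y₁ y₂ : A i), g i y₁ = z₁ ∧ g i y₂ = z₂ := by
  obtain ⟨i₁, p₁, h₁⟩ := hg_surj z₁
  obtain ⟨i₂, p₂, h₂⟩ := hg_surj z₂
  obtain ⟨J, hA, hB⟩ := directed_of (· ≤ ·) i₁ i₂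
  exact ⟨J, f i₁ J hA p₁, f i₂ J hB p₂, by rw [hg, h₁], by rw [hg, h₂]⟩

include hg hg_surj in
lemma lift_fam {σ : Type*} [Fintype σ] (z : σ → R) :
    ∃ (i : ι) (y : σ → A i), ∀ s, g i (y s) = z s := by
  classical
  choose idx y hy using fun s => hg_surj (z s)
  obtain ⟨J, hJ⟩ := Finset.exists_le (Finset.univ.image idx)
  refine ⟨J, fun s => f (idx s) J (hJ _ (Finset.mem_image.mpr ⟨s, Finset.mem_univ _, rfl⟩)) (y s),
    fun s => ?_⟩
  rw [hg, hy]

include hg hg_surj in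
lemma lift_finsupp (v : R →₀ R) :
    ∃ (i : ι) (v' : A i →₀ A i), fsMap (g i).toRingHom v' = v := by
  classical
  induction v using Finsupp.induction with
  | zero => exact ⟨Classical.arbitrary ι, 0, map_zero _⟩
  | single_add a b v hav hb ih =>
    obtain ⟨i₂, v', hv'⟩ := ih
    obtain ⟨i₁, y₁, y₂, hy₁, hy₂⟩ := lift_pair f g hg hg_surj a b
    obtain ⟨J, h₁J, h₂J⟩ := directed_of (· ≤ ·) i₁ i₂
    refine ⟨J, Finsupp.single (f i₁ J h₁J y₁) (f i₁ J h₁J y₂)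
      + fsMap (f i₂ J h₂J).toRingHom v', ?_⟩
    rw [map_add, fsMap_single, fsMap_g_f f g hg, hv']
    simp only [AlgHom.toRingHom_eq_coe, RingHom.coe_coe]
    rw [hg, hg, hy₁, hy₂]

include hg hg_surj in
lemma lift_kerTotal {w : R →₀ R} (hw : w ∈ KaehlerDifferential.kerTotal F R) :
    ∃ (i : ι) (w' : A i →₀ A i), w' ∈ KaehlerDifferential.kerTotal F (A i) ∧
      fsMap (g i).toRingHom w' = w := by
  classical
  induction hw using Submodule.span_induction with
  | mem z hz =>
    obtain ((⟨⟨p, q⟩, rfl⟩ | ⟨⟨p, q⟩, rfl⟩) | ⟨cc, rfl⟩) := hz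
    · obtain ⟨i, y₁, y₂, hy₁, hy₂⟩ := lift_pair f g hg hg_surj p q
      refine ⟨i, Finsupp.single y₁ 1 + Finsupp.single y₂ 1 - Finsupp.single (y₁ + y₂) 1,
        Submodule.subset_span (Or.inl (Or.inl ⟨⟨y₁, y₂⟩, rfl⟩)), ?_⟩
      rw [map_sub, map_add, fsMap_single, fsMap_single, fsMap_single]
      simp only [AlgHom.toRingHom_eq_coe, RingHom.coe_coe, map_one, map_add]
      rw [hy₁, hy₂]
    · obtain ⟨i, y₁, y₂, hy₁, hy₂⟩ := lift_pair f g hg hg_surj p q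
      refine ⟨i, Finsupp.single y₂ y₁ + Finsupp.single y₁ y₂ - Finsupp.single (y₁ * y₂) 1,
        Submodule.subset_span (Or.inl (Or.inr ⟨⟨y₁, y₂⟩, rfl⟩)), ?_⟩
      rw [map_sub, map_add, fsMap_single, fsMap_single, fsMap_single]
      simp only [AlgHom.toRingHom_eq_coe, RingHom.coe_coe, map_one, map_mul]
      rw [hy₁, hy₂]
    · refine ⟨Classical.arbitrary ι, Finsupp.single (algebraMap F _ cc) 1,
        Submodule.subset_span (Or.inr ⟨cc, rfl⟩), ?_⟩
      rw [fsMap_single]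
      simp only [AlgHom.toRingHom_eq_coe, RingHom.coe_coe, map_one, AlgHom.commutes]
  | zero => exact ⟨Classical.arbitrary ι, 0, Submodule.zero_mem _, map_zero _⟩
  | add z₁ z₂ hz₁ hz₂ ih₁ ih₂ =>
    obtain ⟨i₁, w₁, hw₁m, hw₁⟩ := ih₁
    obtain ⟨i₂, w₂, hw₂m, hw₂⟩ := ih₂
    obtain ⟨J, h₁J, h₂J⟩ := directed_of (· ≤ ·) i₁ i₂
    refine ⟨J, fsMap (f i₁ J h₁J).toRingHom w₁ + fsMap (f i₂ J h₂J).toRingHom w₂,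
      Submodule.add_mem _ (fsMap_kerTotal (f i₁ J h₁J) hw₁m) (fsMap_kerTotal (f i₂ J h₂J) hw₂m),
      ?_⟩
    rw [map_add, fsMap_g_f f g hg, fsMap_g_f f g hg, hw₁, hw₂]
  | smul r z hz ih =>
    obtain ⟨i₁, w₁, hw₁m, hw₁⟩ := ih
    obtain ⟨i₀, r', hr'⟩ := hg_surj r
    obtain ⟨J, h₀J, h₁J⟩ := directed_of (· ≤ ·) i₀ i₁
    refine ⟨J, f i₀ J h₀J r' • fsMap (f i₁ J h₁J).toRingHom w₁,
      Submodule.smul_mem _ _ (fsMap_kerTotal (f i₁ J h₁J) hw₁m), ?_⟩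
    rw [fsMap_smul, fsMap_g_f f g hg, hw₁]
    congr 1
    simp only [AlgHom.toRingHom_eq_coe, RingHom.coe_coe]
    rw [hg, hr']

end Lift


/-- Let `F` be a field and `R` an `F`-algebra which is the direct limit of a
filtered directed system of `F`-algebras, each isomorphic (as an `F`-algebra) to a polynomial
ring over `F` in finitely many variables.  Then the module of Kähler differentials
`Ω¹_{R/F}` is a flat `R`-module. -/
theorem statement_18
    {F : Type u} [Field F]
    {ι : Type u} [Preorder ι] [IsDirected ι (· ≤ ·)] [Nonempty ι]
    (A : ι → Type u) [∀ i, CommRing (A i)] [∀ i, Algebra F (A i)]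
    (hpoly : ∀ i, ∃ n : ℕ, Nonempty (A i ≃ₐ[F] MvPolynomial (Fin n) F))
    (f : ∀ i j, i ≤ j → A i →ₐ[F] A j)
    (hf_id : ∀ i (x : A i), f i i le_rfl x = x)
    (hf_comp : ∀ i j k (hij : i ≤ j) (hjk : j ≤ k) (x : A i),
      f j k hjk (f i j hij x) = f i k (hij.trans hjk) x)
    {R : Type u} [CommRing R] [Algebra F R]
    (g : ∀ i, A i →ₐ[F] R)
    (hg : ∀ i j (hij : i ≤ j) (x : A i), g j (f i j hij x) = g i x)
    (hg_surj : ∀ x : R, ∃ (i : ι) (y : A i), g i y = x)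
    (hg_ker : ∀ i (x : A i), g i x = 0 → ∃ (j : ι) (hij : i ≤ j), f i j hij x = 0) :
    Module.Flat R (KaehlerDifferential F R) := by
  classical
  apply Module.Flat.of_forall_isTrivialRelation
  intro σ c x hrel
  set lcR : (R →₀ R) →ₗ[R] KaehlerDifferential F R :=
    Finsupp.linearCombination R (KaehlerDifferential.D F R) with hlcR
  -- represent each `x s` by a finsupp
  choose v hv using fun s => KaehlerDifferential.linearCombination_surjective F R (x s)
  -- the relation element lies in `kerTotal F R`
  set w : R →₀ R := ∑ s, c s • v s with hw
  have hwker : w ∈ KaehlerDifferential.kerTotal F R := by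
    rw [← KaehlerDifferential.kerTotal_eq]
    rw [LinearMap.mem_ker, hw, map_sum]
    simp_rw [map_smul]
    simp_rw [hv]
    exact hrel
  -- lift everything to a common finite stage `N`
  obtain ⟨iw, w₀, hw₀mem, hw₀⟩ := lift_kerTotal f g hg hg_surj hwker
  obtain ⟨ic, c₀, hc₀⟩ := lift_fam f g hg hg_surj c
  choose iv v₀ hv₀ using fun s => lift_finsupp f g hg hg_surj (v s)
  obtain ⟨J₀, hJ₀⟩ := Finset.exists_le (Finset.univ.image iv)
  obtain ⟨J₁, hwJ₁, hcJ₁⟩ := directed_of (· ≤ ·) iw ic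
  obtain ⟨N, hJ₀N, hJ₁N⟩ := directed_of (· ≤ ·) J₀ J₁
  have hivN : ∀ s, iv s ≤ N :=
    fun s => (hJ₀ _ (Finset.mem_image.mpr ⟨s, Finset.mem_univ _, rfl⟩)).trans hJ₀N
  have hiwN : iw ≤ N := hwJ₁.trans hJ₁N
  have hicN : ic ≤ N := hcJ₁.trans hJ₁N
  set cN : Fin σ → A N := fun s => f ic N hicN (c₀ s) with hcN
  set vN : Fin σ → (A N →₀ A N) := fun s => fsMap (f (iv s) N (hivN s)).toRingHom (v₀ s) with hvN
  set wN : A N →₀ A N := fsMap (f iw N hiwN).toRingHom w₀ with hwN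
  have hwNmem : wN ∈ KaehlerDifferential.kerTotal F (A N) :=
    fsMap_kerTotal (f iw N hiwN) hw₀mem
  have hgcN : ∀ s, g N (cN s) = c s := fun s => by rw [hcN]; rw [hg, hc₀]
  have hgvN : ∀ s, fsMap (g N).toRingHom (vN s) = v s := fun s => by
    rw [hvN]; rw [fsMap_g_f f g hg, hv₀]
  have hgwN : fsMap (g N).toRingHom wN = w := by rw [hwN, fsMap_g_f f g hg, hw₀]
  -- the deviation dies at some stage `k`
  set uu : A N →₀ A N := (∑ s, cN s • vN s) - wN with huu
  have huuzero : fsMap (g N).toRingHom uu = 0 := by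
    rw [huu, map_sub, map_sum, hgwN]
    simp_rw [fsMap_smul]
    have : ∀ s ∈ Finset.univ, ((g N).toRingHom (cN s)) • fsMap (g N).toRingHom (vN s)
        = c s • v s := fun s _ => by
      rw [hgvN s]
      congr 1
      exact hgcN s
    rw [Finset.sum_congr rfl this, ← hw, sub_self]
  obtain ⟨k, hNk, hk⟩ := fsMap_dies f hf_comp g hg_ker N uu huuzero
  set ck : Fin σ → A k := fun s => f N k hNk (cN s) with hck
  set vk : Fin σ → (A k →₀ A k) := fun s => fsMap (f N k hNk).toRingHom (vN s) with hvk
  set wk : A k →₀ A k := fsMap (f N k hNk).toRingHom wN with hwk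
  have hwkmem : wk ∈ KaehlerDifferential.kerTotal F (A k) :=
    fsMap_kerTotal (f N k hNk) hwNmem
  have hrelk : ∑ s, ck s • vk s = wk := by
    have h1 : fsMap (f N k hNk).toRingHom uu = 0 := hk
    rw [huu, map_sub, map_sum] at h1
    simp_rw [fsMap_smul] at h1
    rw [sub_eq_zero] at h1
    rw [hwk]
    exact h1
  have hgck : ∀ s, g k (ck s) = c s := fun s => by rw [hck]; rw [hg]; exact hgcN s
  have hgvk : ∀ s, fsMap (g k).toRingHom (vk s) = v s := fun s => by
    rw [hvk]; rw [fsMap_g_f f g hg]; exact hgvN s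
  -- `Ω[A k ⁄ F]` is flat since `A k` is a polynomial algebra
  obtain ⟨n, ⟨e⟩⟩ := hpoly k
  haveI : Algebra.FormallySmooth F (A k) :=
    Algebra.FormallySmooth.of_equiv
      ((MvPolynomial.renameEquiv F (Equiv.ulift.{u, 0})).trans e.symm)
  haveI : Module.Flat (A k) (KaehlerDifferential F (A k)) := inferInstance
  set lck : (A k →₀ A k) →ₗ[A k] KaehlerDifferential F (A k) :=
    Finsupp.linearCombination (A k) (KaehlerDifferential.D F (A k)) with hlck
  set ω : Fin σ → KaehlerDifferential F (A k) := fun s => lck (vk s) with hω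
  have hωrel : ∑ s, ck s • ω s = 0 := by
    rw [hω]
    simp_rw [← map_smul]
    rw [← map_sum, hrelk]
    have : wk ∈ LinearMap.ker lck := by
      rw [hlck, KaehlerDifferential.kerTotal_eq]
      exact hwkmem
    exact this
  obtain ⟨κ, a', y', hy', ha'⟩ :=
    Module.Flat.isTrivialRelation_of_sum_smul_eq_zero hωrel
  choose u' hu' using fun j => KaehlerDifferential.linearCombination_surjective F (A k) (y' j)
  refine ⟨κ, fun s j => g k (a' s j), fun j => lcR (fsMap (g k).toRingHom (u' j)),
    fun s => ?_, fun j => ?_⟩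
  · -- `x s = ∑ j, g k (a' s j) • y j`
    have hmem : vk s - ∑ j, a' s j • u' j ∈ KaehlerDifferential.kerTotal F (A k) := by
      rw [← KaehlerDifferential.kerTotal_eq, LinearMap.mem_ker, map_sub, map_sum]
      simp_rw [map_smul]
      simp_rw [hu']
      have hωs : lck (vk s) = ω s := rfl
      rw [hωs, hy' s, sub_self]
    have h2 := fsMap_kerTotal (g k) hmem
    rw [← KaehlerDifferential.kerTotal_eq, LinearMap.mem_ker] at h2
    rw [map_sub, map_sum] at h2
    simp_rw [fsMap_smul] at h2
    rw [map_sub, map_sum] at h2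
    simp_rw [map_smul] at h2
    rw [hgvk s, hv s] at h2
    rw [sub_eq_zero] at h2
    rw [h2]
    rfl
  · -- `∑ s, c s * g k (a' s j) = 0`
    have h3 : ∀ s ∈ Finset.univ, c s * g k (a' s j) = g k (ck s * a' s j) := fun s _ => by
      rw [map_mul, hgck s]
    rw [Finset.sum_congr rfl h3, ← map_sum, ha' j, map_zero]
end
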